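/- The commutator subgroup of W₂ equals the subgroup generated by {x, y, z, w, α₂}, and the center of W₂ equals the subgroup generated by {α^p, x, y, z, w}. -/

import Mathlib

/-- The commutator convention used in the paper: `[a, b] = a⁻¹ * b⁻¹ * a * b`. -/
def pcomm {G : Type*} [Group G] (a b : G) : G := a⁻¹ * b⁻¹ * a * b

/-- `IsW2 p W α α₁ α₂ α₃ x y z w` says that `W` is (a copy of) the finite group `W₂`
of order `p ^ 9` with presentation on generators `α, α₁, α₂, α₃, x, y, z, w` and relations
`[α₁,α] = α₂`, `[α₁,α₂] = x`, `[α,α₂] = y`, `[α₃,α₁] = z`, `[α₃,α] = w`, `[α₃,α₂] = 1`,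
`α^(p²) = 1`, `α₁^p = α₂^p = α₃^p = 1`, `x^p = y^p = z^p = w^p = 1`, and
`x, y, z, w` commute with all generators. -/
def IsW2 (p : ℕ) (W : Type*) [Group W] (α a₁ a₂ a₃ x y z w : W) : Prop :=
  Subgroup.closure {α, a₁, a₂, a₃, x, y, z, w} = ⊤ ∧
  Nat.card W = p ^ 9 ∧
  pcomm a₁ α = a₂ ∧ pcomm a₁ a₂ = x ∧ pcomm α a₂ = y ∧
  pcomm a₃ a₁ = z ∧ pcomm a₃ α = w ∧ pcomm a₃ a₂ = 1 ∧
  α ^ p ^ 2 = 1 ∧ a₁ ^ p = 1 ∧ a₂ ^ p = 1 ∧ a₃ ^ p = 1 ∧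
  x ^ p = 1 ∧ y ^ p = 1 ∧ z ^ p = 1 ∧ w ^ p = 1 ∧
  ∀ c ∈ ({x, y, z, w} : Set W), ∀ g ∈ ({α, a₁, a₂, a₃, x, y, z, w} : Set W),
    c * g = g * c

/-! The subgroup `N = ⟨x, y, z, w, α₂⟩` is normal, and `W₂ / N` is abelian because it is
generated by the images of `α, α₁, α₃`, whose commutators `α₂, z, w` lie in `N`; as the generators
of `N` are themselves commutators, `N = [W₂, W₂]`.

Every element of `W₂` can be written `t α₃ˡ α₁ʲ αⁱ` with `t ∈ N`, so `p⁹ = |W₂| ≤ |N| p⁴`.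
On the other hand `N` is generated by five commuting elements of order dividing `p`, so
`|N| ≤ p⁵`. Hence `|N| = p⁵` and the exponents of `α₂, x, y, z, w` in an element of `N`
are determined mod `p`.

Write a central element as `α₂ᵏ c α₃ˡ α₁ʲ αⁱ` with `c ∈ ⟨x, y, z, w⟩`. Conjugating `α` by it
yields `α · α₂⁻ʲ x^(j choose 2) w⁻ˡ yᵏ`, so `p ∣ j, k, l`; conjugating `α₁` by the remaining
`αⁱ` yields `α₁ · α₂ⁱ y^-(i choose 2)`, so `p ∣ i`. Conversely `αᵖ` is central because `p`
divides `p choose 2` for odd `p`. -/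

open Subgroup

section GroupFacts

variable {G : Type*} [Group G]

open scoped commutatorElement in
theorem pcomm_mem_commutator (a b : G) : pcomm a b ∈ commutator G := by
  rw [show pcomm a b = ⁅a⁻¹, b⁻¹⁆ by simp only [pcomm, commutatorElement_def, inv_inv],
    commutator_def]
  exact commutator_mem_commutator (mem_top _) (mem_top _)

theorem pcomm_inv (a b : G) : (pcomm a b)⁻¹ = pcomm b a := by
  simp only [pcomm]
  group

theorem pcomm_eq_one_iff {a b : G} : pcomm a b = 1 ↔ a * b = b * a := by
  rw [show pcomm a b = (b * a)⁻¹ * (a * b) by simp only [pcomm]; group, inv_mul_eq_one, eq_comm]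

theorem inv_mul_mul_eq_mul_pcomm (a b : G) : b⁻¹ * a * b = a * pcomm a b := by
  simp only [pcomm]
  group

theorem pcomm_mem {K : Subgroup G} {a b : G} (ha : a ∈ K) (hb : b ∈ K) : pcomm a b ∈ K :=
  mul_mem (mul_mem (mul_mem (inv_mem ha) (inv_mem hb)) ha) hb

theorem map_pcomm {H : Type*} [Group H] (f : G →* H) (a b : G) :
    f (pcomm a b) = pcomm (f a) (f b) := by
  simp only [pcomm, map_mul, map_inv]

theorem mem_center_of_forall_commute {S : Set G} (hS : closure S = ⊤) {c : G}
    (hc : ∀ s ∈ S, s * c = c * s) : c ∈ center G := by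
  rw [← centralizer_univ, ← coe_top, ← hS, centralizer_closure]
  exact mem_centralizer_iff.mpr hc

theorem normal_closure_of_pcomm_mem [Finite G] {S T : Set G} (hS : closure S = ⊤)
    (h : ∀ t ∈ T, ∀ s ∈ S, pcomm t s ∈ closure T) : (closure T).Normal := by
  rw [← normalizer_eq_top_iff, eq_top_iff, ← hS, closure_le]
  intro s hs
  rw [SetLike.mem_coe, ← inv_mem_iff]
  have hconj : closure T ≤ (closure T).comap (MulAut.conj s⁻¹).toMonoidHom := by
    refine (closure_le _).mpr fun t ht => ?_
    simp only [coe_comap, Set.mem_preimage, MulEquiv.coe_toMonoidHom, MulAut.conj_apply, inv_inv,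
      inv_mul_mul_eq_mul_pcomm, SetLike.mem_coe]
    exact mul_mem (subset_closure ht) (h t ht s hs)
  exact mem_normalizer_fintype fun n hn => hconj hn

theorem commutator_le_of_pcomm_mem {S : Set G} (hS : closure S = ⊤) {N : Subgroup G} [N.Normal]
    (h : ∀ s ∈ S, ∀ t ∈ S, pcomm s t ∈ N) : commutator G ≤ N := by
  rw [← Normal.quotient_commutative_iff_commutator_le, ← center_eq_top_iff]
  have hS' : closure (QuotientGroup.mk' N '' S) = ⊤ := by
    rw [← MonoidHom.map_closure, hS, map_top_of_surjective _ (QuotientGroup.mk'_surjective N)]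
  rw [eq_top_iff, ← hS', closure_le]
  rintro _ ⟨s, hs, rfl⟩
  refine mem_center_of_forall_commute hS' ?_
  rintro _ ⟨t, ht, rfl⟩
  rw [← pcomm_eq_one_iff, ← map_pcomm, QuotientGroup.mk'_apply, QuotientGroup.eq_one_iff]
  exact h t ht s hs

theorem card_sup_zpowers_le {K : Subgroup G} [K.Normal] {g : G} {n : ℕ} (hn : 0 < n)
    (hg : g ^ n = 1) : Nat.card (K ⊔ zpowers g : Subgroup G) ≤ Nat.card K * n := by
  rw [← SetLike.coe_sort_coe, normal_mul]
  refine Set.natCard_mul_le.trans (Nat.mul_le_mul_left _ ?_)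
  exact (Nat.card_zpowers g).trans_le (orderOf_le_of_pow_eq_one hn hg)

theorem exists_mul_pow_eq_of_mem_sup_zpowers [Finite G] {K : Subgroup G} [K.Normal] {a g : G}
    (hg : g ∈ K ⊔ zpowers a) : ∃ t ∈ K, ∃ n : ℕ, t * a ^ n = g := by
  rw [← SetLike.mem_coe, normal_mul] at hg
  obtain ⟨t, ht, _, ha, rfl⟩ := hg
  obtain ⟨n, rfl⟩ := mem_powers_iff_mem_zpowers.mpr ha
  exact ⟨t, ht, n, rfl⟩

theorem exists_pow_mul_eq_of_mem_closure_insert [Finite G] {a g : G} {s : Set G}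
    (ha : a ∈ center G) (hg : g ∈ closure (insert a s)) :
    ∃ n : ℕ, ∃ u ∈ closure s, a ^ n * u = g := by
  rw [Set.insert_eq, Subgroup.closure_union, ← zpowers_eq_closure, ← SetLike.mem_coe,
    coe_mul_of_left_le_normalizer_right _ _ (zpowers_le.mpr (center_le_normalizer _ ha))] at hg
  obtain ⟨_, ha', u, hu, rfl⟩ := hg
  obtain ⟨n, rfl⟩ := mem_powers_iff_mem_zpowers.mpr ha'
  exact ⟨n, u, hu, rfl⟩

theorem zpow_eq_pow_val {g : G} {n : ℕ} [NeZero n] (hg : g ^ n = 1) (k : ℤ) :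
    g ^ k = g ^ (k : ZMod n).val := by
  rw [zpow_eq_zpow_emod' k hg, ← ZMod.val_intCast, zpow_natCast]

theorem inv_pow_mul_mul_pow_eq {u v c d : G} (hu : v⁻¹ * u * v = u * c)
    (hc : v⁻¹ * c * v = c * d) (hd : Commute d v) (hcd : Commute c d) (n : ℕ) :
    (v ^ n)⁻¹ * u * v ^ n = u * c ^ n * d ^ n.choose 2 := by
  induction n with
  | zero => simp
  | succ n ih =>
    have hconj : ∀ g, MulAut.conj v⁻¹ g = v⁻¹ * g * v := fun g => by simp
    have hd' : v⁻¹ * d * v = d := by rw [mul_assoc, hd.eq, inv_mul_cancel_left]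
    calc (v ^ (n + 1))⁻¹ * u * v ^ (n + 1) = MulAut.conj v⁻¹ ((v ^ n)⁻¹ * u * v ^ n) := by
          rw [hconj, pow_succ]; group
      _ = u * c * (c * d) ^ n * d ^ n.choose 2 := by
          rw [ih, map_mul, map_mul, map_pow, map_pow, hconj, hconj, hconj, hu, hc, hd']
      _ = u * c ^ (n + 1) * d ^ (n + 1).choose 2 := by
          rw [hcd.mul_pow, Nat.choose_succ_succ', Nat.choose_one_right, pow_add d, pow_succ' c]
          simp only [mul_assoc]

theorem inv_pow_mul_mul_pow_eq_of_commute {u v c : G} (hu : v⁻¹ * u * v = u * c)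
    (hc : Commute c v) (n : ℕ) : (v ^ n)⁻¹ * u * v ^ n = u * c ^ n := by
  simpa using inv_pow_mul_mul_pow_eq hu (by rw [mul_one, mul_assoc, hc.eq, inv_mul_cancel_left])
    (Commute.one_left v) (Commute.one_right c) n

theorem inv_mul_mul_of_mem_center {c : G} (hc : c ∈ center G) (u : G) : c⁻¹ * u * c = u := by
  rw [mul_assoc, mem_center_iff.mp hc u, inv_mul_cancel_left]

theorem inv_mul_mul_mul_of_mem_center {c : G} (hc : c ∈ center G) (h u : G) :
    h⁻¹ * (u * c) * h = h⁻¹ * u * h * c := by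
  simp only [mul_assoc, mem_center_iff.mp hc h]

theorem inv_mul_mul_eq_self_of_mul_mem_center {h v u : G} (hg : h * v ∈ center G)
    (huv : Commute u v) : h⁻¹ * u * h = u := by
  calc h⁻¹ * u * h = h⁻¹ * (u * (h * v)) * v⁻¹ := by group
    _ = v * u * v⁻¹ := by rw [mem_center_iff.mp hg u]; group
    _ = u := by rw [← huv.eq]; group

end GroupFacts

theorem Nat.dvd_choose_two_of_odd {p : ℕ} (hp : Odd p) : p ∣ p.choose 2 := by
  obtain ⟨m, rfl⟩ := hp
  exact ⟨m, by rw [Nat.choose_two_right, Nat.add_sub_cancel, Nat.mul_left_comm,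
    Nat.mul_div_cancel_left _ two_pos]⟩

namespace IsW2

variable {W : Type*} [Group W] {p : ℕ} {α a₁ a₂ a₃ x y z w : W}

theorem finite [NeZero p] (hW : IsW2 p W α a₁ a₂ a₃ x y z w) : Finite W :=
  Nat.finite_of_card_ne_zero (by rw [hW.2.1]; exact pow_ne_zero _ (NeZero.ne p))

theorem pow_eq_one (hW : IsW2 p W α a₁ a₂ a₃ x y z w) {g : W}
    (hg : g ∈ ({a₁, a₂, a₃, x, y, z, w} : Set W)) : g ^ p = 1 := by
  obtain ⟨-, -, -, -, -, -, -, -, -, h₁, h₂, h₃, hx, hy, hz, hw, -⟩ := hW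
  simp only [Set.mem_insert_iff, Set.mem_singleton_iff] at hg
  rcases hg with rfl | rfl | rfl | rfl | rfl | rfl | rfl <;> assumption

theorem mem_center (hW : IsW2 p W α a₁ a₂ a₃ x y z w) {c : W}
    (hc : c ∈ ({x, y, z, w} : Set W)) : c ∈ center W := by
  obtain ⟨htop, -, -, -, -, -, -, -, -, -, -, -, -, -, -, -, hcen⟩ := hW
  exact mem_center_of_forall_commute htop fun s hs => (hcen c hc s hs).symm

theorem commute (hW : IsW2 p W α a₁ a₂ a₃ x y z w) {c : W}
    (hc : c ∈ ({x, y, z, w} : Set W)) (g : W) : Commute c g :=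
  (mem_center_iff.mp (hW.mem_center hc) g).symm

theorem closure_eq_top (hW : IsW2 p W α a₁ a₂ a₃ x y z w) : closure {α, a₁, a₃} = ⊤ := by
  obtain ⟨htop, -, r₁, r₂, r₃, r₄, r₅, -⟩ := hW
  set K := closure {α, a₁, a₃}
  have hα : α ∈ K := subset_closure (by simp)
  have h₁ : a₁ ∈ K := subset_closure (by simp)
  have h₃ : a₃ ∈ K := subset_closure (by simp)
  have h₂ : a₂ ∈ K := r₁ ▸ pcomm_mem h₁ hα
  rw [eq_top_iff, ← htop, closure_le]
  simp only [Set.insert_subset_iff, Set.singleton_subset_iff, SetLike.mem_coe]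
  exact ⟨hα, h₁, h₂, h₃, r₂ ▸ pcomm_mem h₁ h₂, r₃ ▸ pcomm_mem hα h₂, r₄ ▸ pcomm_mem h₃ h₁,
    r₅ ▸ pcomm_mem h₃ hα⟩

theorem normal [NeZero p] (hW : IsW2 p W α a₁ a₂ a₃ x y z w) :
    (closure {x, y, z, w, a₂}).Normal := by
  have := hW.finite
  refine normal_closure_of_pcomm_mem hW.closure_eq_top fun t ht s hs => ?_
  obtain hc | rfl : t ∈ ({x, y, z, w} : Set W) ∨ t = a₂ := by
    simp only [Set.mem_insert_iff, Set.mem_singleton_iff] at ht ⊢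
    tauto
  · rw [pcomm_eq_one_iff.mpr (hW.commute hc s).eq]
    exact one_mem _
  obtain ⟨-, -, -, r₂, r₃, -, -, r₆, -⟩ := hW
  simp only [Set.mem_insert_iff, Set.mem_singleton_iff] at hs
  rcases hs with rfl | rfl | rfl <;> rw [← pcomm_inv]
  · rw [r₃]; exact inv_mem (subset_closure (by simp))
  · rw [r₂]; exact inv_mem (subset_closure (by simp))
  · rw [r₆, inv_one]; exact one_mem _

theorem commutator_eq [NeZero p] (hW : IsW2 p W α a₁ a₂ a₃ x y z w) :
    commutator W = closure {x, y, z, w, a₂} := by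
  have := hW.normal
  have htop := hW.closure_eq_top
  obtain ⟨-, -, r₁, r₂, r₃, r₄, r₅, -⟩ := hW
  set N : Subgroup W := closure {x, y, z, w, a₂}
  refine le_antisymm (commutator_le_of_pcomm_mem htop ?_) ((closure_le _).mpr ?_)
  · have hself (s : W) : pcomm s s ∈ N := by rw [pcomm_eq_one_iff.mpr rfl]; exact one_mem N
    have hsymm {s t : W} (h : pcomm s t ∈ N) : pcomm t s ∈ N := pcomm_inv s t ▸ inv_mem h
    have h₁α : pcomm a₁ α ∈ N := r₁ ▸ subset_closure (by simp)
    have h₃₁ : pcomm a₃ a₁ ∈ N := r₄ ▸ subset_closure (by simp)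
    have h₃α : pcomm a₃ α ∈ N := r₅ ▸ subset_closure (by simp)
    simp only [Set.mem_insert_iff, Set.mem_singleton_iff]
    rintro s (rfl | rfl | rfl) t (rfl | rfl | rfl)
    exacts [hself _, hsymm h₁α, hsymm h₃α, h₁α, hself _, hsymm h₃₁, h₃α, h₃₁, hself _]
  · simp only [Set.insert_subset_iff, Set.singleton_subset_iff, SetLike.mem_coe]
    rw [← r₁, ← r₂, ← r₃, ← r₄, ← r₅]
    exact ⟨pcomm_mem_commutator _ _, pcomm_mem_commutator _ _, pcomm_mem_commutator _ _,
      pcomm_mem_commutator _ _, pcomm_mem_commutator _ _⟩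

theorem normal_of_le [NeZero p] (hW : IsW2 p W α a₁ a₂ a₃ x y z w) {K : Subgroup W}
    (hK : closure {x, y, z, w, a₂} ≤ K) : K.Normal :=
  .of_commutator_le _ (hW.commutator_eq.le.trans hK)

theorem sup_zpowers_eq_top (hW : IsW2 p W α a₁ a₂ a₃ x y z w) :
    closure {x, y, z, w, a₂} ⊔ zpowers a₃ ⊔ zpowers a₁ ⊔ zpowers α = ⊤ := by
  rw [eq_top_iff, ← hW.closure_eq_top, closure_le]
  simp only [Set.insert_subset_iff, Set.singleton_subset_iff, SetLike.mem_coe]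
  exact ⟨mem_sup_right (mem_zpowers α), mem_sup_left (mem_sup_right (mem_zpowers a₁)),
    mem_sup_left (mem_sup_left (mem_sup_right (mem_zpowers a₃)))⟩

theorem pow_five_le_card [NeZero p] (hW : IsW2 p W α a₁ a₂ a₃ x y z w) :
    p ^ 5 ≤ Nat.card (closure {x, y, z, w, a₂}) := by
  set N : Subgroup W := closure {x, y, z, w, a₂}
  have := hW.normal
  have := hW.normal_of_le (K := N ⊔ zpowers a₃) le_sup_left
  have := hW.normal_of_le (K := N ⊔ zpowers a₃ ⊔ zpowers a₁) (le_sup_left.trans le_sup_left)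
  have hp : 0 < p := Nat.pos_of_neZero p
  have hα : α ^ p ^ 2 = 1 := hW.2.2.2.2.2.2.2.2.1
  refine Nat.le_of_mul_le_mul_right (c := p ^ 4) ?_ (by positivity)
  calc p ^ 5 * p ^ 4 = Nat.card (N ⊔ zpowers a₃ ⊔ zpowers a₁ ⊔ zpowers α : Subgroup W) := by
        rw [hW.sup_zpowers_eq_top, card_top, hW.2.1]; ring
    _ ≤ Nat.card (N ⊔ zpowers a₃ ⊔ zpowers a₁ : Subgroup W) * p ^ 2 :=
        card_sup_zpowers_le (by positivity) hα
    _ ≤ Nat.card (N ⊔ zpowers a₃ : Subgroup W) * p * p ^ 2 := by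
        gcongr; exact card_sup_zpowers_le hp (hW.pow_eq_one (by simp))
    _ ≤ Nat.card N * p * p * p ^ 2 := by
        gcongr; exact card_sup_zpowers_le hp (hW.pow_eq_one (by simp))
    _ = Nat.card N * p ^ 4 := by ring

theorem exists_mul_pow_eq [NeZero p] (hW : IsW2 p W α a₁ a₂ a₃ x y z w) (g : W) :
    ∃ t ∈ closure {x, y, z, w, a₂}, ∃ l j i : ℕ, t * a₃ ^ l * a₁ ^ j * α ^ i = g := by
  have := hW.finite
  have := hW.normal
  have := hW.normal_of_le (K := closure {x, y, z, w, a₂} ⊔ zpowers a₃) le_sup_left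
  have := hW.normal_of_le (K := closure {x, y, z, w, a₂} ⊔ zpowers a₃ ⊔ zpowers a₁)
    (le_sup_left.trans le_sup_left)
  obtain ⟨g₁, hg₁, i, rfl⟩ := exists_mul_pow_eq_of_mem_sup_zpowers
    (hW.sup_zpowers_eq_top ▸ mem_top g)
  obtain ⟨g₂, hg₂, j, rfl⟩ := exists_mul_pow_eq_of_mem_sup_zpowers hg₁
  obtain ⟨t, ht, l, rfl⟩ := exists_mul_pow_eq_of_mem_sup_zpowers hg₂
  exact ⟨t, ht, l, j, i, rfl⟩

theorem exists_pow_mul_eq [NeZero p] (hW : IsW2 p W α a₁ a₂ a₃ x y z w) {t : W}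
    (ht : t ∈ closure {x, y, z, w, a₂}) :
    ∃ k A B C D : ℕ, a₂ ^ k * (x ^ A * y ^ B * z ^ C * w ^ D) = t := by
  have := hW.finite
  have hx := hW.mem_center (c := x) (by simp)
  have hy := hW.mem_center (c := y) (by simp)
  have hz := hW.mem_center (c := z) (by simp)
  have hw := hW.mem_center (c := w) (by simp)
  obtain ⟨A, t₁, ht₁, rfl⟩ := exists_pow_mul_eq_of_mem_closure_insert hx ht
  obtain ⟨B, t₂, ht₂, rfl⟩ := exists_pow_mul_eq_of_mem_closure_insert hy ht₁
  obtain ⟨C, t₃, ht₃, rfl⟩ := exists_pow_mul_eq_of_mem_closure_insert hz ht₂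
  obtain ⟨D, t₄, ht₄, rfl⟩ := exists_pow_mul_eq_of_mem_closure_insert hw ht₃
  obtain ⟨k, rfl⟩ := mem_powers_iff_mem_zpowers.mpr (zpowers_eq_closure a₂ ▸ ht₄)
  have hc : x ^ A * y ^ B * z ^ C * w ^ D ∈ center W :=
    mul_mem (mul_mem (mul_mem (pow_mem hx A) (pow_mem hy B)) (pow_mem hz C)) (pow_mem hw D)
  refine ⟨k, A, B, C, D, ?_⟩
  rw [mem_center_iff.mp hc]
  simp only [mul_assoc]

theorem dvd_of_zpow_mul_eq_one [NeZero p] (hW : IsW2 p W α a₁ a₂ a₃ x y z w) {k A B C D : ℤ}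
    (h : a₂ ^ k * (x ^ A * y ^ B * z ^ C * w ^ D) = 1) :
    (p : ℤ) ∣ k ∧ (p : ℤ) ∣ A ∧ (p : ℤ) ∣ B ∧ (p : ℤ) ∣ C ∧ (p : ℤ) ∣ D := by
  set N : Subgroup W := closure {x, y, z, w, a₂}
  let f : (Fin 5 → ZMod p) → N := fun e =>
    ⟨a₂ ^ (e 0).val * (x ^ (e 1).val * y ^ (e 2).val * z ^ (e 3).val * w ^ (e 4).val), by
      have hmem : ∀ g ∈ ({x, y, z, w, a₂} : Set W), g ∈ N := fun g hg => subset_closure hg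
      exact mul_mem (pow_mem (hmem _ (by simp)) _) (mul_mem (mul_mem (mul_mem
        (pow_mem (hmem _ (by simp)) _) (pow_mem (hmem _ (by simp)) _))
        (pow_mem (hmem _ (by simp)) _)) (pow_mem (hmem _ (by simp)) _))⟩
  have hf (v : Fin 5 → ℤ) : (f fun i => (v i : ZMod p) : W) =
      a₂ ^ v 0 * (x ^ v 1 * y ^ v 2 * z ^ v 3 * w ^ v 4) := by
    simp only [f, ← zpow_eq_pow_val (hW.pow_eq_one (by simp : a₂ ∈ _)),
      ← zpow_eq_pow_val (hW.pow_eq_one (by simp : x ∈ _)),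
      ← zpow_eq_pow_val (hW.pow_eq_one (by simp : y ∈ _)),
      ← zpow_eq_pow_val (hW.pow_eq_one (by simp : z ∈ _)),
      ← zpow_eq_pow_val (hW.pow_eq_one (by simp : w ∈ _))]
  have hsurj : Function.Surjective f := by
    rintro ⟨t, ht⟩
    obtain ⟨k, A, B, C, D, rfl⟩ := hW.exists_pow_mul_eq ht
    exact ⟨fun i => (![(k : ℤ), A, B, C, D] i : ZMod p), Subtype.ext (by simp [hf])⟩
  have hcard : Nat.card (Fin 5 → ZMod p) = Nat.card N := by
    refine le_antisymm ?_ (Nat.card_le_card_of_surjective f hsurj)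
    simpa using hW.pow_five_le_card
  have hzero := ((Nat.bijective_iff_surjective_and_card f).mpr ⟨hsurj, hcard⟩).injective
    (a₁ := fun i => (![k, A, B, C, D] i : ZMod p)) (a₂ := 0)
    (Subtype.ext (by rw [hf]; simpa [f] using h))
  simp only [← ZMod.intCast_zmod_eq_zero_iff_dvd]
  exact ⟨congrFun hzero 0, congrFun hzero 1, congrFun hzero 2, congrFun hzero 3, congrFun hzero 4⟩

theorem pow_eq_one_of_dvd (hW : IsW2 p W α a₁ a₂ a₃ x y z w) {g : W}
    (hg : g ∈ ({a₁, a₂, a₃, x, y, z, w} : Set W)) {n : ℕ} (hn : p ∣ n) : g ^ n = 1 :=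
  orderOf_dvd_iff_pow_eq_one.mp ((orderOf_dvd_of_pow_eq_one (hW.pow_eq_one hg)).trans hn)

theorem α_pow_conj_a₁ (hW : IsW2 p W α a₁ a₂ a₃ x y z w) (n : ℕ) :
    (α ^ n)⁻¹ * a₁ * α ^ n = a₁ * a₂ ^ n * y⁻¹ ^ n.choose 2 := by
  have hy := hW.commute (c := y) (by simp)
  obtain ⟨-, -, r₁, -, r₃, -⟩ := hW
  exact inv_pow_mul_mul_pow_eq (by rw [inv_mul_mul_eq_mul_pcomm, r₁])
    (by rw [inv_mul_mul_eq_mul_pcomm, ← pcomm_inv, r₃]) (hy α).inv_left (hy a₂).inv_left.symm n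

theorem α_pow_conj_a₃ (hW : IsW2 p W α a₁ a₂ a₃ x y z w) (n : ℕ) :
    (α ^ n)⁻¹ * a₃ * α ^ n = a₃ * w ^ n := by
  have hw := hW.commute (c := w) (by simp)
  obtain ⟨-, -, -, -, -, -, r₅, -⟩ := hW
  exact inv_pow_mul_mul_pow_eq_of_commute (by rw [inv_mul_mul_eq_mul_pcomm, r₅]) (hw α) n

theorem a₁_pow_conj_α (hW : IsW2 p W α a₁ a₂ a₃ x y z w) (n : ℕ) :
    (a₁ ^ n)⁻¹ * α * a₁ ^ n = α * a₂⁻¹ ^ n * x ^ n.choose 2 := by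
  have hx := hW.commute (c := x) (by simp)
  obtain ⟨-, -, r₁, r₂, -⟩ := hW
  refine inv_pow_mul_mul_pow_eq (by rw [inv_mul_mul_eq_mul_pcomm, ← pcomm_inv, r₁]) ?_
    (hx a₁) (hx a₂⁻¹).symm n
  rw [show a₁⁻¹ * a₂⁻¹ * a₁ = pcomm a₁ a₂ * a₂⁻¹ by simp only [pcomm]; group, r₂, (hx a₂⁻¹).eq]

theorem a₂_pow_conj_α (hW : IsW2 p W α a₁ a₂ a₃ x y z w) (n : ℕ) :
    (a₂ ^ n)⁻¹ * α * a₂ ^ n = α * y ^ n := by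
  have hy := hW.commute (c := y) (by simp)
  obtain ⟨-, -, -, -, r₃, -⟩ := hW
  exact inv_pow_mul_mul_pow_eq_of_commute (by rw [inv_mul_mul_eq_mul_pcomm, r₃]) (hy a₂) n

theorem a₃_pow_conj_α (hW : IsW2 p W α a₁ a₂ a₃ x y z w) (n : ℕ) :
    (a₃ ^ n)⁻¹ * α * a₃ ^ n = α * w⁻¹ ^ n := by
  have hw := hW.commute (c := w) (by simp)
  obtain ⟨-, -, -, -, -, -, r₅, -⟩ := hW
  exact inv_pow_mul_mul_pow_eq_of_commute (by rw [inv_mul_mul_eq_mul_pcomm, ← pcomm_inv, r₅])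
    (hw a₃).inv_left n

theorem α_pow_mem_center (hW : IsW2 p W α a₁ a₂ a₃ x y z w) (hp : Odd p) :
    α ^ p ∈ center W := by
  have hcomm {u : W} (h : (α ^ p)⁻¹ * u * α ^ p = u) : u * α ^ p = α ^ p * u := by
    rwa [mul_assoc, inv_mul_eq_iff_eq_mul] at h
  refine mem_center_of_forall_commute hW.closure_eq_top ?_
  simp only [Set.mem_insert_iff, Set.mem_singleton_iff]
  rintro s (rfl | rfl | rfl)
  · exact (Commute.self_pow s p).eq
  · refine hcomm ?_
    rw [hW.α_pow_conj_a₁, hW.pow_eq_one (by simp), inv_pow,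
      hW.pow_eq_one_of_dvd (by simp) (Nat.dvd_choose_two_of_odd hp), inv_one, mul_one, mul_one]
  · refine hcomm ?_
    rw [hW.α_pow_conj_a₃, hW.pow_eq_one (by simp), mul_one]

theorem closure_le_center (hW : IsW2 p W α a₁ a₂ a₃ x y z w) (hp : Odd p) :
    closure {α ^ p, x, y, z, w} ≤ center W := by
  rw [closure_le, Set.insert_subset_iff]
  exact ⟨hW.α_pow_mem_center hp, fun c hc => hW.mem_center hc⟩

theorem dvd_of_mul_pow_mem_center [NeZero p] (hW : IsW2 p W α a₁ a₂ a₃ x y z w) {c : W}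
    (hc : c ∈ center W) {k l j i : ℕ} (hg : a₂ ^ k * c * a₃ ^ l * a₁ ^ j * α ^ i ∈ center W) :
    p ∣ k ∧ p ∣ l ∧ p ∣ j := by
  have hy : y ∈ center W := hW.mem_center (by simp)
  have hw : w ∈ center W := hW.mem_center (by simp)
  have hconj : (a₂ ^ k * c * a₃ ^ l * a₁ ^ j)⁻¹ * α * (a₂ ^ k * c * a₃ ^ l * a₁ ^ j) =
      α * (a₂⁻¹ ^ j * (x ^ j.choose 2 * (w⁻¹ ^ l * y ^ k))) := calc
    _ = (a₁ ^ j)⁻¹ * ((a₃ ^ l)⁻¹ * (c⁻¹ * ((a₂ ^ k)⁻¹ * α * a₂ ^ k) * c) * a₃ ^ l) * a₁ ^ j := by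
        group
    _ = (a₁ ^ j)⁻¹ * ((a₃ ^ l)⁻¹ * α * a₃ ^ l * y ^ k) * a₁ ^ j := by
        rw [hW.a₂_pow_conj_α, inv_mul_mul_of_mem_center hc,
          inv_mul_mul_mul_of_mem_center (pow_mem hy k)]
    _ = α * (a₂⁻¹ ^ j * (x ^ j.choose 2 * (w⁻¹ ^ l * y ^ k))) := by
        rw [hW.a₃_pow_conj_α, mul_assoc α, inv_mul_mul_mul_of_mem_center
          (mul_mem (pow_mem (inv_mem hw) l) (pow_mem hy k)), hW.a₁_pow_conj_α]
        simp only [mul_assoc]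
  rw [inv_mul_mul_eq_self_of_mul_mem_center hg (Commute.self_pow α i), left_eq_mul,
    ← ((hW.commute (c := y) (by simp) w⁻¹).pow_pow k l).eq] at hconj
  obtain ⟨hj, -, hk, -, hl⟩ := hW.dvd_of_zpow_mul_eq_one (k := -j) (A := j.choose 2) (B := k)
    (C := 0) (D := -l) (by simpa [mul_assoc] using hconj)
  simp only [dvd_neg, Int.natCast_dvd_natCast] at hj hk hl
  exact ⟨hk, hl, hj⟩

theorem dvd_of_α_pow_mul_mem_center [NeZero p] (hW : IsW2 p W α a₁ a₂ a₃ x y z w) {c : W}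
    (hc : c ∈ center W) {i : ℕ} (hg : α ^ i * c ∈ center W) : p ∣ i := by
  have h := inv_mul_mul_eq_self_of_mul_mem_center hg (mem_center_iff.mp hc a₁)
  rw [hW.α_pow_conj_a₁, mul_assoc, mul_eq_left] at h
  obtain ⟨hi, -⟩ := hW.dvd_of_zpow_mul_eq_one (k := i) (A := 0) (B := -(i.choose 2)) (C := 0)
    (D := 0) (by simpa using h)
  exact Int.natCast_dvd_natCast.mp hi

theorem center_le_closure [NeZero p] (hW : IsW2 p W α a₁ a₂ a₃ x y z w) :
    center W ≤ closure {α ^ p, x, y, z, w} := by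
  intro g hg
  obtain ⟨t, ht, l, j, i, rfl⟩ := hW.exists_mul_pow_eq g
  obtain ⟨k, A, B, C, D, rfl⟩ := hW.exists_pow_mul_eq ht
  have hmem {K : Subgroup W} (hK : ∀ u ∈ ({x, y, z, w} : Set W), u ∈ K) :
      x ^ A * y ^ B * z ^ C * w ^ D ∈ K :=
    mul_mem (mul_mem (mul_mem (pow_mem (hK x (by simp)) A) (pow_mem (hK y (by simp)) B))
      (pow_mem (hK z (by simp)) C)) (pow_mem (hK w (by simp)) D)
  have hc := hmem fun u hu => hW.mem_center hu
  obtain ⟨hk, hl, hj⟩ := hW.dvd_of_mul_pow_mem_center hc hg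
  rw [hW.pow_eq_one_of_dvd (by simp) hk, hW.pow_eq_one_of_dvd (by simp) hl,
    hW.pow_eq_one_of_dvd (by simp) hj, one_mul, mul_one, mul_one] at hg ⊢
  rw [← mem_center_iff.mp hc] at hg
  obtain ⟨m, rfl⟩ := hW.dvd_of_α_pow_mul_mem_center hc hg
  rw [pow_mul]
  exact mul_mem (hmem fun u hu => subset_closure (Set.mem_insert_of_mem _ hu))
    (pow_mem (subset_closure (Set.mem_insert _ _)) m)

end IsW2

theorem stmt_11_general (p : ℕ) (hodd : Odd p)
    (W : Type) [Group W] (α a₁ a₂ a₃ x y z w : W)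
    (hW : IsW2 p W α a₁ a₂ a₃ x y z w) :
    commutator W = Subgroup.closure {x, y, z, w, a₂} ∧
    Subgroup.center W = Subgroup.closure {α ^ p, x, y, z, w} := by
  have : NeZero p := ⟨hodd.pos.ne'⟩
  exact ⟨hW.commutator_eq, le_antisymm hW.center_le_closure (hW.closure_le_center hodd)⟩

/-- The commutator subgroup of `W₂` is generated by `{x, y, z, w, α₂}` and the center of
`W₂` is generated by `{α^p, x, y, z, w}`. -/
theorem stmt_11 (p : ℕ) (hp : p.Prime) (hodd : Odd p)
    (W : Type) [Group W] (α a₁ a₂ a₃ x y z w : W)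
    (hW : IsW2 p W α a₁ a₂ a₃ x y z w) :
    commutator W = Subgroup.closure {x, y, z, w, a₂} ∧
    Subgroup.center W = Subgroup.closure {α ^ p, x, y, z, w} :=
  stmt_11_general p hodd W α a₁ a₂ a₃ x y z w hW
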